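/- If two ground terms s and t over signature F are convertible with respect to an equational system E (s ↔*_E t), and > is a ground-total reduction order with R = E^> ground complete, then s and t have the same R-normal form. -/

import Mathlib

/-- First-order terms over a signature `F` with natural-number variables. -/
inductive Term (F : Type) : Type
  | var : ℕ → Term F
  | fn : F → List (Term F) → Term F

namespace Term

mutual
/-- Application of a substitution to a term. -/
def subst {F : Type} (σ : ℕ → Term F) : Term F → Term F
  | var x => σ x
  | fn f ts => fn f (substL σ ts)
/-- Application of a substitution to a list of terms. -/
def substL {F : Type} (σ : ℕ → Term F) : List (Term F) → List (Term F)
  | [] => []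
  | t :: ts => subst σ t :: substL σ ts
end

/-- Ground terms: terms without variables. -/
inductive IsGround {F : Type} : Term F → Prop
  | fn : ∀ (f : F) (ts : List (Term F)), (∀ t ∈ ts, IsGround t) → IsGround (fn f ts)

/-- Well-formed terms with respect to an arity function. -/
inductive WF {F : Type} (ar : F → ℕ) : Term F → Prop
  | var : ∀ x, WF ar (var x)
  | fn : ∀ (f : F) (ts : List (Term F)), ts.length = ar f →
      (∀ t ∈ ts, WF ar t) → WF ar (fn f ts)

/-- The variable `x` occurs in a term. -/
inductive Occurs {F : Type} (x : ℕ) : Term F → Prop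
  | var : Occurs x (var x)
  | fn : ∀ {f ts t}, t ∈ ts → Occurs x t → Occurs x (fn f ts)

end Term

open Term

/-- A substitution is a renaming (variable permutation) if it is given by a
bijection on variables. -/
def IsRenaming {F : Type} (π : ℕ → Term F) : Prop :=
  ∃ ρ : ℕ ≃ ℕ, ∀ x, π x = Term.var (ρ x)

/-- One-step rewrite relation generated by a set of rules: closure of the
rules under substitutions and contexts. -/
inductive Rew {F : Type} (R : Set (Term F × Term F)) : Term F → Term F → Prop
  | rule : ∀ {l r : Term F}, (l, r) ∈ R → ∀ (σ : ℕ → Term F),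
      Rew R (subst σ l) (subst σ r)
  | ctxt : ∀ {s t : Term F} (f : F) (as bs : List (Term F)), Rew R s t →
      Rew R (fn f (as ++ s :: bs)) (fn f (as ++ t :: bs))

/-- Symmetric closure of a set of equations. -/
def symcl {F : Type} (E : Set (Term F × Term F)) : Set (Term F × Term F) :=
  E ∪ {p | (p.2, p.1) ∈ E}

/-- `E^>`: all orientable instances of equations in the symmetric closure of `E`. -/
def ordInst {F : Type} (gt : Term F → Term F → Prop)
    (E : Set (Term F × Term F)) : Set (Term F × Term F) :=
  {p | ∃ (u v : Term F) (σ : ℕ → Term F), (u, v) ∈ symcl E ∧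
    p = (subst σ u, subst σ v) ∧ gt (subst σ u) (subst σ v)}

/-- Many-step rewriting. -/
def RStar {F : Type} (S : Set (Term F × Term F)) : Term F → Term F → Prop :=
  Relation.ReflTransGen (Rew S)

/-- Conversion: reflexive-transitive closure of rewriting in both directions. -/
def Conv {F : Type} (S : Set (Term F × Term F)) : Term F → Term F → Prop :=
  Relation.ReflTransGen (fun a b => Rew S a b ∨ Rew S b a)

/-- Joinability. -/
def Joinable {F : Type} (S : Set (Term F × Term F)) (s t : Term F) : Prop :=
  ∃ u, RStar S s u ∧ RStar S t u

/-- Termination of an abstract relation. -/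
def Terminating {A : Type} (r : A → A → Prop) : Prop :=
  WellFounded (fun a b => r b a)

/-- A reduction order: well-founded strict order on terms closed under
contexts and substitutions. -/
structure RedOrder (F : Type) where
  gt : Term F → Term F → Prop
  wf : WellFounded fun s t => gt t s
  trans : ∀ {s t u}, gt s t → gt t u → gt s u
  irrefl : ∀ s, ¬ gt s s
  subst_mono : ∀ {s t} (σ : ℕ → Term F), gt s t → gt (subst σ s) (subst σ t)
  ctxt_mono : ∀ {s t} (f : F) (as bs : List (Term F)), gt s t →
      gt (fn f (as ++ s :: bs)) (fn f (as ++ t :: bs))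

/-- Ground-totality of an order. -/
def GroundTotal {F : Type} (gt : Term F → Term F → Prop) : Prop :=
  ∀ s t : Term F, IsGround s → IsGround t → s ≠ t → gt s t ∨ gt t s

/-- Subterm at a position. -/
inductive SubtAt {F : Type} : Term F → List ℕ → Term F → Prop
  | refl : ∀ t, SubtAt t [] t
  | step : ∀ {f : F} {ts : List (Term F)} {i u p v},
      ts[i]? = some u → SubtAt u p v → SubtAt (fn f ts) (i :: p) v

/-- Replacement of the subterm at a position. -/
inductive ReplAt {F : Type} : Term F → List ℕ → Term F → Term F → Prop
  | refl : ∀ t u, ReplAt t [] u u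
  | step : ∀ {f : F} {ts : List (Term F)} {i u p v u'},
      ts[i]? = some u → ReplAt u p v u' →
      ReplAt (fn f ts) (i :: p) v (fn f (ts.set i u'))

/-- Extended critical pairs of a set of equations w.r.t. an order. -/
def ECP {F : Type} (gt : Term F → Term F → Prop)
    (E : Set (Term F × Term F)) : Set (Term F × Term F) :=
  {p | ∃ (e₁ e₂ : Term F × Term F) (π₁ π₂ μ : ℕ → Term F)
        (pos : List ℕ) (lsub l₂c : Term F),
    e₁ ∈ symcl E ∧ e₂ ∈ symcl E ∧ IsRenaming π₁ ∧ IsRenaming π₂ ∧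
    -- the variants are variable disjoint
    (∀ x, (Occurs x (subst π₁ e₁.1) ∨ Occurs x (subst π₁ e₁.2)) →
          ¬ (Occurs x (subst π₂ e₂.1) ∨ Occurs x (subst π₂ e₂.2))) ∧
    -- a function-symbol position of l₂
    SubtAt (subst π₂ e₂.1) pos lsub ∧ (∀ x, lsub ≠ Term.var x) ∧
    -- μ is a most general unifier of l₁ and l₂|_pos
    subst μ (subst π₁ e₁.1) = subst μ lsub ∧
    (∀ θ : ℕ → Term F, subst θ (subst π₁ e₁.1) = subst θ lsub →
      ∃ δ : ℕ → Term F, ∀ x, θ x = subst δ (subst μ (Term.var x))) ∧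
    -- orientation conditions
    ¬ gt (subst μ (subst π₁ e₁.2)) (subst μ (subst π₁ e₁.1)) ∧
    ¬ gt (subst μ (subst π₂ e₂.2)) (subst μ (subst π₂ e₂.1)) ∧
    -- the extended critical pair l₂[r₁]_pos μ ≈ r₂ μ
    ReplAt (subst π₂ e₂.1) pos (subst π₁ e₁.2) l₂c ∧
    p = (subst μ l₂c, subst μ (subst π₂ e₂.2))}

/-- The inference system oKB of ordered completion. -/
inductive OKB {F : Type} (gt : Term F → Term F → Prop) :
    Set (Term F × Term F) × Set (Term F × Term F) →
    Set (Term F × Term F) × Set (Term F × Term F) → Prop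
  | deduce : ∀ E R (s t u : Term F) (π : ℕ → Term F), IsRenaming π →
      Rew (R ∪ E) u s → Rew (R ∪ E) u t →
      OKB gt (E, R) (insert (subst π s, subst π t) E, R)
  | orient_lr : ∀ E R (s t : Term F) (π : ℕ → Term F), IsRenaming π → gt s t →
      OKB gt (insert (s, t) E, R) (E, insert (subst π s, subst π t) R)
  | orient_rl : ∀ E R (s t : Term F) (π : ℕ → Term F), IsRenaming π → gt t s →
      OKB gt (insert (s, t) E, R) (E, insert (subst π t, subst π s) R)
  | delete : ∀ E R (s : Term F), OKB gt (insert (s, s) E, R) (E, R)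
  | compose : ∀ E R (s t u : Term F) (π : ℕ → Term F), IsRenaming π →
      Rew (insert (s, t) R ∪ ordInst gt E) t u →
      OKB gt (E, insert (s, t) R) (E, insert (subst π s, subst π u) R)
  | simplify_l : ∀ E R (s t u : Term F) (π : ℕ → Term F), IsRenaming π →
      Rew (R ∪ ordInst gt (insert (s, t) E)) s u →
      OKB gt (insert (s, t) E, R) (insert (subst π u, subst π t) E, R)
  | simplify_r : ∀ E R (s t u : Term F) (π : ℕ → Term F), IsRenaming π →
      Rew (R ∪ ordInst gt (insert (s, t) E)) t u →
      OKB gt (insert (s, t) E, R) (insert (subst π s, subst π u) E, R)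
  | collapse : ∀ E R (s t u : Term F) (π : ℕ → Term F), IsRenaming π →
      Rew (insert (t, s) R ∪ ordInst gt E) t u →
      OKB gt (E, insert (t, s) R) (insert (subst π u, subst π s) E, R)

/-- Lexicographic extension of a relation to (equal-length) lists. -/
inductive LexExt {A : Type} (r : A → A → Prop) : List A → List A → Prop
  | head : ∀ {a b : A} {as bs : List A}, r a b → as.length = bs.length →
      LexExt r (a :: as) (b :: bs)
  | tail : ∀ {a : A} {as bs : List A}, LexExt r as bs →
      LexExt r (a :: as) (a :: bs)

/-- The lexicographic path order induced by a precedence. -/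
inductive LPO {F : Type} (p : F → F → Prop) : Term F → Term F → Prop
  | sub : ∀ {f ss s t}, s ∈ ss → LPO p s t → LPO p (fn f ss) t
  | subeq : ∀ {f ss t}, t ∈ ss → LPO p (fn f ss) t
  | prec : ∀ {f g ss ts}, p f g → (∀ t ∈ ts, LPO p (fn f ss) t) →
      LPO p (fn f ss) (fn g ts)
  | lex : ∀ {f ss ts}, (∀ t ∈ ts, LPO p (fn f ss) t) → LexExt (LPO p) ss ts →
      LPO p (fn f ss) (fn f ts)

mutual
/-- Weight of a term. -/
def wt {F : Type} (w : F → ℕ) (w0 : ℕ) : Term F → ℕ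
  | Term.var _ => w0
  | Term.fn f ts => w f + wtL w w0 ts
/-- Sum of the weights of a list of terms. -/
def wtL {F : Type} (w : F → ℕ) (w0 : ℕ) : List (Term F) → ℕ
  | [] => 0
  | t :: ts => wt w w0 t + wtL w w0 ts
end

/-- The Knuth–Bendix order on ground terms. -/
inductive KBO {F : Type} (p : F → F → Prop) (w : F → ℕ) (w0 : ℕ) :
    Term F → Term F → Prop
  | wgt : ∀ {f g ss ts}, wt w w0 (fn f ss) > wt w w0 (fn g ts) →
      KBO p w w0 (fn f ss) (fn g ts)
  | prec : ∀ {f g ss ts}, wt w w0 (fn f ss) = wt w w0 (fn g ts) → p f g →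
      KBO p w w0 (fn f ss) (fn g ts)
  | lex : ∀ {f ss ts}, wt w w0 (fn f ss) = wt w w0 (fn f ts) →
      LexExt (KBO p w w0) ss ts → KBO p w w0 (fn f ss) (fn f ts)

/-- Admissibility of a weight function for a precedence. -/
def Admissible {F : Type} (ar : F → ℕ) (p : F → F → Prop)
    (w : F → ℕ) (w0 : ℕ) : Prop :=
  0 < w0 ∧ (∀ c, ar c = 0 → w0 ≤ w c) ∧
  (∀ f, ar f = 1 → w f = 0 → ∀ g, g ≠ f → p f g)

/-!
Instantiate every variable of the `E`-conversion between `s` and `t` by the ground term `s`: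
this leaves `s` and `t` unchanged and yields a conversion through ground terms only. By
ground totality each of its steps is trivial or an `E^>`-step in one direction, so ground
confluence joins `s` and `t`, and a further use of ground confluence identifies their
normal forms.
-/

namespace Term

variable {F : Type}

theorem substL_eq_map (σ : ℕ → Term F) (ts : List (Term F)) :
    substL σ ts = ts.map (subst σ) := by
  induction ts with
  | nil => rfl
  | cons t ts ih => simp [substL, ih]

mutual
theorem subst_subst (σ τ : ℕ → Term F) : ∀ t : Term F,
    subst τ (subst σ t) = subst (fun x => subst τ (σ x)) t
  | .var _ => rfl
  | .fn f ts => by simp [subst, substL_substL σ τ ts]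
theorem substL_substL (σ τ : ℕ → Term F) : ∀ ts : List (Term F),
    substL τ (substL σ ts) = substL (fun x => subst τ (σ x)) ts
  | [] => rfl
  | t :: ts => by simp [substL, subst_subst σ τ t, substL_substL σ τ ts]
end

theorem subst_var (t : Term F) : subst Term.var t = t := by
  induction t using Term.rec (motive_2 := fun ts => substL Term.var ts = ts) with
  | var _ => rfl
  | fn f ts ih => simp [subst, ih]
  | nil => rfl
  | cons t ts ih ihs => simp [substL, ih, ihs]

theorem IsGround.subst_eq {t : Term F} (h : IsGround t) (σ : ℕ → Term F) :
    subst σ t = t := by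
  induction h with
  | fn f ts _ ih =>
    simp only [subst, substL_eq_map]
    exact congrArg (Term.fn f) (List.map_congr_left ih |>.trans ts.map_id)

theorem isGround_subst {σ : ℕ → Term F} (hσ : ∀ x, IsGround (σ x)) :
    ∀ t : Term F, IsGround (subst σ t)
  | .var x => hσ x
  | .fn f ts => by
    simp only [subst, substL_eq_map]
    refine IsGround.fn f _ fun u hu => ?_
    obtain ⟨w, -, rfl⟩ := List.mem_map.mp hu
    exact isGround_subst hσ w

theorem IsGround.of_mem_args {f : F} {as bs : List (Term F)} {s : Term F}
    (h : IsGround (Term.fn f (as ++ s :: bs))) : IsGround s := by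
  cases h with
  | fn _ _ hts => exact hts s (by simp)

end Term

section Rewriting

variable {F : Type}

theorem Rew.subst_closed {S : Set (Term F × Term F)} {a b : Term F} (σ : ℕ → Term F)
    (h : Rew S a b) : Rew S (subst σ a) (subst σ b) := by
  induction h with
  | rule hmem τ =>
    rw [subst_subst, subst_subst]
    exact Rew.rule hmem _
  | ctxt f as bs _ ih =>
    simp only [Term.subst, substL_eq_map, List.map_append, List.map_cons]
    rw [← substL_eq_map, ← substL_eq_map]
    exact Rew.ctxt f _ _ ih

theorem Rew.of_mem {S : Set (Term F × Term F)} {a b : Term F} (h : (a, b) ∈ S) : Rew S a b := by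
  simpa only [subst_var] using Rew.rule h Term.var

theorem Rew.ground_trichotomy {gt : Term F → Term F → Prop} (hgt : GroundTotal gt)
    {E : Set (Term F × Term F)} {a b : Term F} (h : Rew E a b)
    (ha : IsGround a) (hb : IsGround b) :
    a = b ∨ Rew (ordInst gt E) a b ∨ Rew (ordInst gt E) b a := by
  induction h with
  | @rule l r hmem σ =>
    by_cases he : subst σ l = subst σ r
    · exact Or.inl he
    rcases hgt _ _ ha hb he with hlr | hrl
    · exact Or.inr (Or.inl (Rew.of_mem ⟨l, r, σ, Or.inl hmem, rfl, hlr⟩))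
    · exact Or.inr (Or.inr (Rew.of_mem ⟨r, l, σ, Or.inr hmem, rfl, hrl⟩))
  | ctxt f as bs _ ih =>
    rcases ih ha.of_mem_args hb.of_mem_args with rfl | hst | hts
    · exact Or.inl rfl
    · exact Or.inr (Or.inl (Rew.ctxt f as bs hst))
    · exact Or.inr (Or.inr (Rew.ctxt f as bs hts))

end Rewriting

section GroundConfluence

variable {F : Type} {R : Set (Term F × Term F)}

def GroundConfluent (R : Set (Term F × Term F)) : Prop :=
  ∀ t u v : Term F, IsGround t → RStar R t u → RStar R t v → Joinable R u v

theorem eq_of_rstar_of_normal {u x : Term F} (hu : ∀ w, ¬ Rew R u w) (h : RStar R u x) :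
    x = u := by
  rcases Relation.ReflTransGen.cases_head h with h | ⟨c, hc, _⟩
  · exact h.symm
  · exact absurd hc (hu c)

theorem GroundConfluent.joinable_of_step (hconf : GroundConfluent R) {s a b : Term F}
    (hsa : Joinable R s a) (ha : IsGround a) (hab : a = b ∨ Rew R a b ∨ Rew R b a) :
    Joinable R s b := by
  obtain ⟨w, hsw, haw⟩ := hsa
  rcases hab with rfl | hab | hba
  · exact ⟨w, hsw, haw⟩
  · obtain ⟨w', hww', hbw'⟩ := hconf a w b ha haw (.single hab)
    exact ⟨w', hsw.trans hww', hbw'⟩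
  · exact ⟨w, hsw, .head hba haw⟩

theorem GroundConfluent.joinable_subst_of_conv {gt : Term F → Term F → Prop}
    (hgt : GroundTotal gt) {E : Set (Term F × Term F)} (hconf : GroundConfluent (ordInst gt E))
    {σ : ℕ → Term F} (hσ : ∀ x, IsGround (σ x)) {s t : Term F} (hst : Conv E s t) :
    Joinable (ordInst gt E) (subst σ s) (subst σ t) := by
  induction hst with
  | refl => exact ⟨_, .refl, .refl⟩
  | @tail a b _ hab ih =>
    have ha := isGround_subst hσ a
    have hb := isGround_subst hσ b
    refine hconf.joinable_of_step ih ha ?_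
    rcases hab with hab | hba
    · exact (hab.subst_closed σ).ground_trichotomy hgt ha hb
    · rcases (hba.subst_closed σ).ground_trichotomy hgt hb ha with h | h | h
      exacts [Or.inl h.symm, Or.inr (Or.inr h), Or.inr (Or.inl h)]

theorem GroundConfluent.normal_eq_of_joinable (hconf : GroundConfluent R) {s t u v : Term F}
    (hs : IsGround s) (ht : IsGround t) (hst : Joinable R s t)
    (hsu : RStar R s u) (hu : ∀ w, ¬ Rew R u w)
    (htv : RStar R t v) (hv : ∀ w, ¬ Rew R v w) : u = v := by
  obtain ⟨w, hsw, htw⟩ := hst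
  obtain ⟨y, hvy, hwy⟩ := hconf t v w ht htv htw
  rw [eq_of_rstar_of_normal hv hvy] at hwy
  obtain ⟨z, huz, hvz⟩ := hconf s u v hs hsu (hsw.trans hwy)
  rw [← eq_of_rstar_of_normal hu huz, eq_of_rstar_of_normal hv hvz]

end GroundConfluence

/-- convertible ground terms have the same normal form w.r.t. a
ground complete system `R = E^>`. -/
theorem ground_convertible_same_nf {F : Type} [Nonempty F] (ro : RedOrder F)
    (hgt : GroundTotal ro.gt) (E : Set (Term F × Term F))
    (hterm : Terminating (Rew (ordInst ro.gt E)))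
    (hconf : ∀ t u v : Term F, Term.IsGround t →
      RStar (ordInst ro.gt E) t u → RStar (ordInst ro.gt E) t v →
      Joinable (ordInst ro.gt E) u v)
    (s t : Term F) (hs : Term.IsGround s) (ht : Term.IsGround t)
    (hconv : Conv E s t) :
    ∀ u v : Term F, RStar (ordInst ro.gt E) s u →
      (∀ w, ¬ Rew (ordInst ro.gt E) u w) →
      RStar (ordInst ro.gt E) t v → (∀ w, ¬ Rew (ordInst ro.gt E) v w) →
      u = v := by
  intro u v hsu hu htv hv
  have hjoin : Joinable (ordInst ro.gt E) s t := by
    simpa only [hs.subst_eq, ht.subst_eq] using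
      GroundConfluent.joinable_subst_of_conv hgt hconf (σ := fun _ => s) (fun _ => hs) hconv
  exact GroundConfluent.normal_eq_of_joinable hconf hs ht hjoin hsu hu htv hv
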